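/- Suppose F is nonempty, Q(O) > p_max, ε ≥ 0, and A ⊆ O satisfies Q(A) ≤ (1+ε)·OPT1 and Q(O \ A) ≤ p_max − ε·OPT1. Then every feasible schedule has makespan at least P(F) + Q(O) + p_max − OPT2. -/

import Mathlib

/-!
Fix a longest flow-shop job `j₀` and let `B` be its start time on `M2`. On `M2` every other job
runs entirely before `B` or entirely after `B + p_max`. The early flow-shop jobs also run on `M1`
before `B`, together with `j₀`; the late ones run on `M3` after `B + p_max`, together with `j₀`.
Since intervals on one machine are disjoint, their lengths add up within each time window, so the
makespan is at least `P(F) + max(p_max, Q(O₁)) + max(p_max, Q(O₂))`, where `O₁`, `O₂` are the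
early and late open-shop jobs. If `Q(O₁) ≤ p_max` then `Q(O₁) ≤ OPT2`, which gives the bound, and
the same holds for `O₂`. If both exceed `p_max`, then `Q(O) ≥ OPT1 + Q(O₂) > OPT1 + p_max`. This
is impossible, because the assumptions on `A` give `Q(O) = Q(A) + Q(O \ A) ≤ OPT1 + p_max`.
-/

open Finset

noncomputable section

/-- Processing time of a job: `p` on flow-shop jobs, `q` otherwise. -/
def jobTime {J : Type*} [DecidableEq J] (F : Finset J) (p q : J → ℝ) (j : J) : ℝ :=
  if j ∈ F then p j else q j

/-- Feasibility of a schedule given by start times `S j i` of job `j` on machine `i`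
(machines `M1, M2, M3` are machines `0, 1, 2`):
all start times are nonnegative, on each machine the open processing intervals of
distinct jobs are pairwise disjoint, for each job the open processing intervals on the
three machines are pairwise disjoint, and each flow-shop job goes through
`M1`, `M2`, `M3` in this order. -/
def Feasible {J : Type*} [DecidableEq J] (F O : Finset J) (p q : J → ℝ)
    (S : J → Fin 3 → ℝ) : Prop :=
  (∀ j ∈ F ∪ O, ∀ i : Fin 3, 0 ≤ S j i) ∧
  (∀ i : Fin 3, ∀ j ∈ F ∪ O, ∀ k ∈ F ∪ O, j ≠ k →
    S j i + jobTime F p q j ≤ S k i ∨ S k i + jobTime F p q k ≤ S j i) ∧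
  (∀ j ∈ F ∪ O, ∀ i i' : Fin 3, i ≠ i' →
    S j i + jobTime F p q j ≤ S j i' ∨ S j i' + jobTime F p q j ≤ S j i) ∧
  (∀ j ∈ F, S j 0 + p j ≤ S j 1 ∧ S j 1 + p j ≤ S j 2)

/-- Makespan: supremum of all completion times of the jobs of `F ∪ O`. -/
def makespan {J : Type*} [DecidableEq J] (F O : Finset J) (p q : J → ℝ)
    (S : J → Fin 3 → ℝ) : ℝ :=
  sSup {x : ℝ | ∃ j ∈ F ∪ O, ∃ i : Fin 3, x = S j i + jobTime F p q j}

open MeasureTheory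

theorem sum_le_sub_of_pairwiseDisjoint_Ioo {ι : Type*} (T : Finset ι) {s t : ι → ℝ} {a b : ℝ}
    (hab : a ≤ b) (ht : ∀ j ∈ T, 0 ≤ t j) (ha : ∀ j ∈ T, a ≤ s j) (hb : ∀ j ∈ T, s j + t j ≤ b)
    (hd : (T : Set ι).PairwiseDisjoint fun j => Set.Ioo (s j) (s j + t j)) :
    ∑ j ∈ T, t j ≤ b - a := by
  have hvol : volume (⋃ j ∈ T, Set.Ioo (s j) (s j + t j)) ≤ volume (Set.Icc a b) :=
    measure_mono <| Set.iUnion₂_subset fun j hj =>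
      Set.Ioo_subset_Icc_self.trans (Set.Icc_subset_Icc (ha j hj) (hb j hj))
  rw [measure_biUnion_finset hd fun _ _ => measurableSet_Ioo, Real.volume_Icc] at hvol
  simp only [Real.volume_Ioo, add_sub_cancel_left] at hvol
  rwa [← ENNReal.ofReal_sum_of_nonneg ht, ENNReal.ofReal_le_ofReal_iff (sub_nonneg.2 hab)] at hvol

theorem disjoint_Ioo_of_add_le_or_add_le {s₁ s₂ t₁ t₂ : ℝ} (h : s₁ + t₁ ≤ s₂ ∨ s₂ + t₂ ≤ s₁) :
    Disjoint (Set.Ioo s₁ (s₁ + t₁)) (Set.Ioo s₂ (s₂ + t₂)) := by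
  rcases h with h | h
  · exact (Set.Ioc_disjoint_Ioc_of_le h).mono Set.Ioo_subset_Ioc_self Set.Ioo_subset_Ioc_self
  · exact ((Set.Ioc_disjoint_Ioc_of_le h).mono Set.Ioo_subset_Ioc_self
      Set.Ioo_subset_Ioc_self).symm

theorem sum_add_sub_le_max_add_max {ι : Type*} [DecidableEq ι] {O O' : Finset ι} {q : ι → ℝ}
    {c OPT1 OPT2 : ℝ}
    (hOPT1 : OPT1 ∈ lowerBounds {x : ℝ | ∃ X ⊆ O, x = ∑ j ∈ X, q j ∧ c < x})
    (hOPT2 : OPT2 ∈ upperBounds {x : ℝ | ∃ Y ⊆ O, x = ∑ j ∈ Y, q j ∧ x ≤ c})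
    (hO : ∑ j ∈ O, q j ≤ OPT1 + c) (hO' : O' ⊆ O) :
    ∑ j ∈ O, q j + c - OPT2 ≤ max c (∑ j ∈ O', q j) + max c (∑ j ∈ O \ O', q j) := by
  have hsplit : ∑ j ∈ O \ O', q j + ∑ j ∈ O', q j = ∑ j ∈ O, q j := sum_sdiff hO'
  rcases le_or_gt (∑ j ∈ O', q j) c with h₁ | h₁
  · have := hOPT2 ⟨O', hO', rfl, h₁⟩
    linarith [le_max_left c (∑ j ∈ O', q j), le_max_right c (∑ j ∈ O \ O', q j)]
  rcases le_or_gt (∑ j ∈ O \ O', q j) c with h₂ | h₂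
  · have := hOPT2 ⟨O \ O', sdiff_subset, rfl, h₂⟩
    linarith [le_max_right c (∑ j ∈ O', q j), le_max_left c (∑ j ∈ O \ O', q j)]
  · have := hOPT1 ⟨O', hO', rfl, h₁⟩
    linarith

section Schedule

variable {J : Type*} [DecidableEq J] {F O : Finset J} {p q : J → ℝ} {S : J → Fin 3 → ℝ}

theorem jobTime_of_mem_left {j : J} (hj : j ∈ F) : jobTime F p q j = p j := if_pos hj

theorem jobTime_of_mem_right (hdisj : Disjoint F O) {j : J} (hj : j ∈ O) :
    jobTime F p q j = q j :=
  if_neg (disjoint_right.1 hdisj hj)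

theorem le_makespan {j : J} (hj : j ∈ F ∪ O) (i : Fin 3) :
    S j i + jobTime F p q j ≤ makespan F O p q S := by
  refine le_csSup (Set.Finite.bddAbove ?_) ⟨j, hj, i, rfl⟩
  refine ((F ∪ O).finite_toSet.biUnion fun j _ =>
    Set.finite_range fun i => S j i + jobTime F p q j).subset ?_
  rintro x ⟨j, hj, i, rfl⟩
  exact Set.mem_biUnion hj ⟨i, rfl⟩

theorem jobTime_nonneg (hdisj : Disjoint F O) (hp : ∀ j ∈ F, 0 ≤ p j) (hq : ∀ j ∈ O, 0 ≤ q j)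
    {j : J} (hj : j ∈ F ∪ O) : 0 ≤ jobTime F p q j := by
  rcases mem_union.1 hj with hj | hj
  · exact jobTime_of_mem_left hj ▸ hp j hj
  · exact jobTime_of_mem_right hdisj hj ▸ hq j hj

namespace Feasible

theorem sum_add_sum_le_of_mem_Icc (hfeas : Feasible F O p q S) (hdisj : Disjoint F O)
    (hp : ∀ j ∈ F, 0 ≤ p j) (hq : ∀ j ∈ O, 0 ≤ q j) {X Y : Finset J} (hX : X ⊆ F) (hY : Y ⊆ O)
    (i : Fin 3) {a b : ℝ} (hab : a ≤ b) (hXw : ∀ j ∈ X, a ≤ S j i ∧ S j i + p j ≤ b)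
    (hYw : ∀ j ∈ Y, a ≤ S j i ∧ S j i + q j ≤ b) :
    ∑ j ∈ X, p j + ∑ j ∈ Y, q j ≤ b - a := by
  have hXY : X ∪ Y ⊆ F ∪ O := union_subset_union hX hY
  have hw : ∀ j ∈ X ∪ Y, a ≤ S j i ∧ S j i + jobTime F p q j ≤ b := by
    intro j hj
    rcases mem_union.1 hj with hj | hj
    · exact jobTime_of_mem_left (hX hj) ▸ hXw j hj
    · exact jobTime_of_mem_right hdisj (hY hj) ▸ hYw j hj
  have key := sum_le_sub_of_pairwiseDisjoint_Ioo (X ∪ Y) hab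
    (fun j hj => jobTime_nonneg hdisj hp hq (hXY hj)) (fun j hj => (hw j hj).1)
    (fun j hj => (hw j hj).2)
    (fun j hj k hk hjk => disjoint_Ioo_of_add_le_or_add_le
      (hfeas.2.1 i j (hXY hj) k (hXY hk) hjk))
  rwa [sum_union (hdisj.mono hX hY), sum_congr rfl fun j hj => jobTime_of_mem_left (hX hj),
    sum_congr rfl fun j hj => jobTime_of_mem_right hdisj (hY hj)] at key

theorem sum_add_max_le_start (hfeas : Feasible F O p q S) (hdisj : Disjoint F O)
    (hp : ∀ j ∈ F, 0 ≤ p j) (hq : ∀ j ∈ O, 0 ≤ q j) {j₀ : J} (hj₀ : j₀ ∈ F)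
    {X Y : Finset J} (hX : X ⊆ F) (hY : Y ⊆ O) (hj₀X : j₀ ∉ X)
    (hXw : ∀ j ∈ X, S j 1 + p j ≤ S j₀ 1) (hYw : ∀ j ∈ Y, S j 1 + q j ≤ S j₀ 1) :
    ∑ j ∈ X, p j + max (p j₀) (∑ j ∈ Y, q j) ≤ S j₀ 1 := by
  have hstart : ∀ j ∈ F ∪ O, ∀ i, 0 ≤ S j i := hfeas.1
  have hflow := hfeas.2.2.2
  have hB : 0 ≤ S j₀ 1 := by
    linarith [hstart j₀ (mem_union_left _ hj₀) 0, (hflow j₀ hj₀).1, hp j₀ hj₀]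
  have hM2 := hfeas.sum_add_sum_le_of_mem_Icc hdisj hp hq hX hY 1 hB
    (fun j hj => ⟨hstart j (mem_union_left _ (hX hj)) 1, hXw j hj⟩)
    (fun j hj => ⟨hstart j (mem_union_right _ (hY hj)) 1, hYw j hj⟩)
  have hM1 := hfeas.sum_add_sum_le_of_mem_Icc hdisj hp hq (insert_subset hj₀ hX)
    (empty_subset O) 0 hB
    (fun j hj => ⟨hstart j (mem_union_left _ (insert_subset hj₀ hX hj)) 0, by
      rcases mem_insert.1 hj with rfl | hj
      · exact (hflow j hj₀).1
      · linarith [(hflow j (hX hj)).1, hXw j hj, hp j (hX hj)]⟩)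
    (by simp)
  rw [sum_insert hj₀X, sum_empty] at hM1
  rw [add_max]
  exact max_le (by linarith) (by linarith)

theorem finish_add_sum_add_max_le_makespan (hfeas : Feasible F O p q S) (hdisj : Disjoint F O)
    (hp : ∀ j ∈ F, 0 ≤ p j) (hq : ∀ j ∈ O, 0 ≤ q j) {j₀ : J} (hj₀ : j₀ ∈ F)
    {X Y : Finset J} (hX : X ⊆ F) (hY : Y ⊆ O) (hj₀X : j₀ ∉ X)
    (hXw : ∀ j ∈ X, S j₀ 1 + p j₀ ≤ S j 1) (hYw : ∀ j ∈ Y, S j₀ 1 + p j₀ ≤ S j 1) :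
    S j₀ 1 + p j₀ + ∑ j ∈ X, p j + max (p j₀) (∑ j ∈ Y, q j) ≤ makespan F O p q S := by
  have hflow := hfeas.2.2.2
  have hendF : ∀ j ∈ F, ∀ i, S j i + p j ≤ makespan F O p q S := fun j hj i => by
    simpa only [jobTime_of_mem_left hj] using le_makespan (mem_union_left O hj) i
  have hendO : ∀ j ∈ O, ∀ i, S j i + q j ≤ makespan F O p q S := fun j hj i => by
    simpa only [jobTime_of_mem_right hdisj hj] using le_makespan (mem_union_right F hj) i
  have hB := hendF j₀ hj₀ 1
  have hM2 := hfeas.sum_add_sum_le_of_mem_Icc hdisj hp hq hX hY 1 hB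
    (fun j hj => ⟨hXw j hj, hendF j (hX hj) 1⟩) (fun j hj => ⟨hYw j hj, hendO j (hY hj) 1⟩)
  have hM3 := hfeas.sum_add_sum_le_of_mem_Icc hdisj hp hq (insert_subset hj₀ hX)
    (empty_subset O) 2 hB
    (fun j hj => ⟨by
      rcases mem_insert.1 hj with rfl | hj
      · exact (hflow j hj₀).2
      · linarith [(hflow j (hX hj)).2, hXw j hj, hp j (hX hj)],
      hendF j (insert_subset hj₀ hX hj) 2⟩)
    (by simp)
  rw [sum_insert hj₀X, sum_empty] at hM3
  rw [add_max]
  exact max_le (by linarith) (by linarith)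

theorem exists_sum_add_max_add_max_le_makespan (hfeas : Feasible F O p q S)
    (hdisj : Disjoint F O) (hp : ∀ j ∈ F, 0 ≤ p j) (hq : ∀ j ∈ O, 0 ≤ q j) {j₀ : J}
    (hj₀ : j₀ ∈ F) :
    ∃ O' ⊆ O, ∑ j ∈ F, p j + max (p j₀) (∑ j ∈ O', q j) + max (p j₀) (∑ j ∈ O \ O', q j) ≤
      makespan F O p q S := by
  set early : J → Prop := fun j => S j 1 + jobTime F p q j ≤ S j₀ 1
  have hlate : ∀ j ∈ F ∪ O, j ≠ j₀ → ¬ early j → S j₀ 1 + p j₀ ≤ S j 1 := fun j hj hne h =>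
    jobTime_of_mem_left (p := p) (q := q) hj₀ ▸
      (hfeas.2.1 1 j hj j₀ (mem_union_left _ hj₀) hne).resolve_left h
  set F₀ := F.erase j₀
  refine ⟨O.filter early, filter_subset _ _, ?_⟩
  have hbefore := hfeas.sum_add_max_le_start hdisj hp hq hj₀ (X := F₀.filter early)
    (Y := O.filter early) ((filter_subset _ _).trans (erase_subset _ _)) (filter_subset _ _)
    (fun h => notMem_erase j₀ F (mem_of_mem_filter _ h))
    (fun j hj => by
      simpa only [early, jobTime_of_mem_left (mem_of_mem_erase (mem_of_mem_filter _ hj))]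
        using (mem_filter.1 hj).2)
    (fun j hj => by
      simpa only [early, jobTime_of_mem_right hdisj (mem_of_mem_filter _ hj)]
        using (mem_filter.1 hj).2)
  have hafter := hfeas.finish_add_sum_add_max_le_makespan hdisj hp hq hj₀
    (X := F₀.filter (¬ early ·)) (Y := O.filter (¬ early ·))
    ((filter_subset _ _).trans (erase_subset _ _)) (filter_subset _ _)
    (fun h => notMem_erase j₀ F (mem_of_mem_filter _ h))
    (fun j hj => hlate j (mem_union_left _ (mem_of_mem_erase (mem_of_mem_filter _ hj)))
      (ne_of_mem_erase (mem_of_mem_filter _ hj)) (mem_filter.1 hj).2)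
    (fun j hj => hlate j (mem_union_right _ (mem_of_mem_filter _ hj))
      (fun h => disjoint_left.1 hdisj (h ▸ hj₀) (mem_of_mem_filter _ hj)) (mem_filter.1 hj).2)
  rw [← filter_not]
  have hsplit : ∑ j ∈ F, p j = p j₀ + (∑ j ∈ F₀.filter early, p j +
      ∑ j ∈ F₀.filter (¬ early ·), p j) := by
    rw [sum_filter_add_sum_filter_not, add_sum_erase _ _ hj₀]
  linarith

end Feasible

end Schedule

theorem stmt4_general {J : Type*} [DecidableEq J] (F O : Finset J) (p q : J → ℝ)
    (hdisj : Disjoint F O)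
    (hp : ∀ j ∈ F, 0 < p j) (hq : ∀ j ∈ O, 0 < q j)
    (hF : F.Nonempty)
    (OPT1 OPT2 : ℝ)
    (hOPT1 : IsLeast {x : ℝ | ∃ X ⊆ O, x = (∑ j ∈ X, q j) ∧ F.sup' hF p < x} OPT1)
    (hOPT2 : IsGreatest {x : ℝ | ∃ Y ⊆ O, x = (∑ j ∈ Y, q j) ∧ x ≤ F.sup' hF p} OPT2)
    (ε : ℝ)
    (A : Finset J) (hAO : A ⊆ O)
    (hA1 : (∑ j ∈ A, q j) ≤ (1 + ε) * OPT1)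
    (hA2 : (∑ j ∈ O \ A, q j) ≤ F.sup' hF p - ε * OPT1)
    (S : J → Fin 3 → ℝ) (hfeas : Feasible F O p q S) :
    (∑ j ∈ F, p j) + (∑ j ∈ O, q j) + F.sup' hF p - OPT2 ≤ makespan F O p q S := by
  obtain ⟨jmax, hjmax, hpmax⟩ := exists_mem_eq_sup' hF p
  have hO : ∑ j ∈ O, q j ≤ OPT1 + F.sup' hF p := by
    linarith [sum_sdiff hAO (f := q)]
  obtain ⟨O', hO', hM⟩ := hfeas.exists_sum_add_max_add_max_le_makespan hdisj
    (fun j hj => (hp j hj).le) (fun j hj => (hq j hj).le) hjmax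
  rw [← hpmax] at hM
  linarith [sum_add_sub_le_max_add_max hOPT1.2 hOPT2.2 hO hO']

/-- Lemma 3.4: if `Q(O) > p_max`, `Q(A) ≤ (1+ε)·OPT1` and `Q(O \ A) ≤ p_max − ε·OPT1`,
then every feasible schedule has makespan at least `P(F) + Q(O) + p_max − OPT2`, where
`OPT1 = min {Q(X) : X ⊆ O, Q(X) > p_max}` and `OPT2 = max {Q(Y) : Y ⊆ O, Q(Y) ≤ p_max}`. -/
theorem stmt4 {J : Type*} [DecidableEq J] (F O : Finset J) (p q : J → ℝ)
    (hdisj : Disjoint F O)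
    (hp : ∀ j ∈ F, 0 < p j) (hq : ∀ j ∈ O, 0 < q j)
    (hF : F.Nonempty)
    (hQO : F.sup' hF p < ∑ j ∈ O, q j)
    (OPT1 OPT2 : ℝ)
    (hOPT1 : IsLeast {x : ℝ | ∃ X ⊆ O, x = (∑ j ∈ X, q j) ∧ F.sup' hF p < x} OPT1)
    (hOPT2 : IsGreatest {x : ℝ | ∃ Y ⊆ O, x = (∑ j ∈ Y, q j) ∧ x ≤ F.sup' hF p} OPT2)
    (ε : ℝ) (hε : 0 ≤ ε)
    (A : Finset J) (hAO : A ⊆ O)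
    (hA1 : (∑ j ∈ A, q j) ≤ (1 + ε) * OPT1)
    (hA2 : (∑ j ∈ O \ A, q j) ≤ F.sup' hF p - ε * OPT1)
    (S : J → Fin 3 → ℝ) (hfeas : Feasible F O p q S) :
    (∑ j ∈ F, p j) + (∑ j ∈ O, q j) + F.sup' hF p - OPT2 ≤ makespan F O p q S :=
  stmt4_general F O p q hdisj hp hq hF OPT1 OPT2 hOPT1 hOPT2 ε A hAO hA1 hA2 S hfeas
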